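/- For every c > 0 and every smooth real function f with compact support contained in (0,∞) one has ∫₀^∞ [f′(s)² − (c/s) f(s)²] ds ≥ −(c²/4) ∫₀^∞ f(s)² ds. -/

import Mathlib

open MeasureTheory Set
open scoped ENNReal NNReal Pointwise

noncomputable section

/-- `Euc k` is the Euclidean space `ℝᵏ`. -/
abbrev Euc (k : ℕ) := EuclideanSpace ℝ (Fin k)

/-- An open set `U ⊆ ℝ^m` has Lipschitz boundary: near every boundary point, after an
affine isometry, `U` is the subgraph of a Lipschitz function of the first `m-1` coordinates. -/
def HasLipschitzBoundary {m : ℕ} (U : Set (Euc m)) : Prop :=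
  ∀ p ∈ frontier U,
    ∃ (hm : 0 < m) (r : ℝ) (Φ : Euc m ≃ᵃⁱ[ℝ] Euc m)
      (h : Euc (m - 1) → ℝ) (K : ℝ≥0),
      0 < r ∧ Φ 0 = p ∧ LipschitzWith K h ∧ h 0 = 0 ∧
      U ∩ Metric.ball p r =
        (Φ '' {y : Euc m | y ⟨m - 1, Nat.sub_lt hm Nat.one_pos⟩ <
            h (WithLp.toLp 2 (fun i : Fin (m - 1) => y ⟨i.1, lt_of_lt_of_le i.2 (Nat.sub_le m 1)⟩))}) ∩
          Metric.ball p r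

/-- The last `n` coordinates `x′` of a point `x = (x₁, x′) ∈ ℝ^{n+1}`. -/
def tailE {n : ℕ} (x : Euc (n + 1)) : Euc n := WithLp.toLp 2 (fun i : Fin n => x i.succ)

/-- The infinite sharp cone `Ω_ε = {(x₁,x′) : x₁ > 0, x′ ∈ ε x₁ ω}`. -/
def cone (n : ℕ) (ω : Set (Euc n)) (ε : ℝ) : Set (Euc (n + 1)) :=
  {x | 0 < x 0 ∧ tailE x ∈ (ε * x 0) • ω}

/-- The geometric constant `N_ω = σ_{n-1}(∂ω) / |ω|`. -/
def Nomega (n : ℕ) (ω : Set (Euc n)) : ℝ :=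
  (μH[(n : ℝ) - 1] (frontier ω)).toReal / (volume ω).toReal

/-- The `j`-th min-max value `Λ_j(q, D)`: infimum over `j`-dimensional subspaces `S ⊆ D`
(of functions, identified with their restrictions to `U`) of the supremum of the Rayleigh
quotients `q(u) / ‖u‖²_{L²(U,μ)}` over nonzero `u ∈ S`. -/
def lambdaJ {X : Type*} [MeasurableSpace X] (μ : Measure X) (U : Set X)
    (q : (X → ℝ) → ℝ) (D : Set (X → ℝ)) (j : ℕ) : ℝ :=
  sInf {v : ℝ | ∃ S : Submodule ℝ (X → ℝ), (S : Set (X → ℝ)) ⊆ D ∧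
    Module.finrank ℝ S = j ∧
    (∀ u ∈ S, (∀ x ∈ U, u x = 0) → u = 0) ∧
    v = sSup {w : ℝ | ∃ u ∈ S, u ≠ (0 : X → ℝ) ∧
      w = q u / ∫ x in U, (u x) ^ 2 ∂μ}}

/-- The class of smooth compactly supported functions on `ℝ^{n+1}` vanishing for
`x₁` outside some compact interval `[b,c] ⊆ I`. -/
def Ddom (n : ℕ) (I : Set ℝ) : Set (Euc (n + 1) → ℝ) :=
  {u | ContDiff ℝ (⊤ : ℕ∞) u ∧ HasCompactSupport u ∧
    ∃ b c : ℝ, b ≤ c ∧ Icc b c ⊆ I ∧ ∀ x : Euc (n + 1), x 0 ∉ Icc b c → u x = 0}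

/-- The Robin form `q_ε^α(u) = ∫_{Ω_ε} |∇u|² dx − α ∫_{∂Ω_ε} u² dσ_n`. -/
def qform (n : ℕ) (ω : Set (Euc n)) (α ε : ℝ) (u : Euc (n + 1) → ℝ) : ℝ :=
  (∫ x in cone n ω ε, ‖fderiv ℝ u x‖ ^ 2) -
    α * ∫ x in frontier (cone n ω ε), (u x) ^ 2 ∂μH[(n : ℝ)]

/-- The truncated Robin form `t_ε(u) = ∫_{V_ε} |∇u|² dx − ∫_{∂₀V_ε} u² dσ_n`. -/
def tform (n : ℕ) (ω : Set (Euc n)) (a ε : ℝ) (u : Euc (n + 1) → ℝ) : ℝ :=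
  (∫ x in cone n ω ε ∩ {x | x 0 < a}, ‖fderiv ℝ u x‖ ^ 2) -
    ∫ x in frontier (cone n ω ε) ∩ {x | x 0 < a}, (u x) ^ 2 ∂μH[(n : ℝ)]

/-- The map `X(s,t) = (s, ε s t)`. -/
def Xmap (n : ℕ) (ε s : ℝ) (t : Euc n) : Euc (n + 1) :=
  WithLp.toLp 2 (fun j : Fin (n + 1) => Fin.cases s (fun i => ε * s * t i) j)

/-- Smooth real functions with compact support contained in `I`. -/
def Cc (I : Set ℝ) : Set (ℝ → ℝ) :=
  {f | ContDiff ℝ (⊤ : ℕ∞) f ∧ HasCompactSupport f ∧ tsupport f ⊆ I}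

/-- The 1D form `∫_I [f′(s)² + ((n²−2n)/(4s²) − N/(λ s)) f(s)²] ds`. -/
def aform (n : ℕ) (N lam : ℝ) (I : Set ℝ) (f : ℝ → ℝ) : ℝ :=
  ∫ s in I,
    ((deriv f s) ^ 2 + (((n : ℝ) ^ 2 - 2 * n) / (4 * s ^ 2) - N / (lam * s)) * (f s) ^ 2)

/-- `R = sup_{t ∈ ω} |t|`. -/
def Rsup (n : ℕ) (ω : Set (Euc n)) : ℝ := sSup ((fun t => ‖t‖) '' ω)

/-!
Ground-state substitution. The function `ψ(s) = s e^{-cs/2}` solves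
`-ψ'' - (c/s) ψ = -(c²/4) ψ` on `(0, ∞)`; with its logarithmic derivative `g(s) = s⁻¹ - c/2`
one has `g' + g² = c²/4 - c/s`, hence pointwise
`f'² - (c/s) f² + (c²/4) f² = (f' - g f)² + (g f²)'`.
The last term integrates to zero because `f` has compact support in `(0, ∞)`, and the square is
nonnegative.
-/

theorem IsCompact.exists_Ioo_superset_of_subset_Ioi {K : Set ℝ} {x : ℝ} (hK : IsCompact K)
    (hKx : K ⊆ Ioi x) : ∃ a b, x < a ∧ a ≤ b ∧ K ⊆ Ioo a b := by
  rcases K.eq_empty_or_nonempty with rfl | hne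
  · exact ⟨x + 1, x + 1, by linarith, le_rfl, empty_subset _⟩
  have hx : x < sInf K := hKx (hK.sInf_mem hne)
  have hle : sInf K ≤ sSup K := csInf_le_csSup hne hK.bddBelow hK.bddAbove
  refine ⟨(x + sInf K) / 2, sSup K + 1, by linarith, by linarith, fun s hs => ⟨?_, ?_⟩⟩
  · linarith [csInf_le hK.bddBelow hs]
  · linarith [le_csSup hK.bddAbove hs]

theorem setIntegral_Ioi_eq_intervalIntegral_of_support_subset {F : ℝ → ℝ} {x a b : ℝ}
    (hxa : x ≤ a) (hab : a ≤ b) (hF : Function.support F ⊆ Ioo a b) :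
    ∫ s in Ioi x, F s = ∫ s in a..b, F s := by
  rw [intervalIntegral.integral_of_le hab]
  refine setIntegral_eq_of_subset_of_forall_sdiff_eq_zero measurableSet_Ioi
    (fun s hs => hxa.trans_lt hs.1) fun s hs => ?_
  exact Function.notMem_support.mp fun h => hs.2 (Ioo_subset_Ioc_self (hF h))

theorem sq_sub_coulomb_eq {s : ℝ} (hs : s ≠ 0) (c y y' : ℝ) :
    y' ^ 2 - c / s * y ^ 2 = (y' - (s⁻¹ - c / 2) * y) ^ 2
      + (-(s ^ 2)⁻¹ * y ^ 2 + (s⁻¹ - c / 2) * (2 * y * y')) - c ^ 2 / 4 * y ^ 2 := by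
  field_simp
  ring

theorem hasDerivAt_inv_sub_mul_sq {f : ℝ → ℝ} {f' s : ℝ} (c : ℝ) (hs : s ≠ 0)
    (hf : HasDerivAt f f' s) :
    HasDerivAt (fun t => (t⁻¹ - c / 2) * f t ^ 2)
      (-(s ^ 2)⁻¹ * f s ^ 2 + (s⁻¹ - c / 2) * (2 * f s * f')) s := by
  simpa using ((hasDerivAt_inv hs).sub_const (c / 2)).fun_mul (hf.fun_pow 2)

theorem intervalIntegral_sq_deriv_sub_coulomb_eq {f : ℝ → ℝ} {a b : ℝ} (c : ℝ)
    (hf : ContDiff ℝ 1 f) (ha : 0 < a) (hab : a ≤ b) (hsupp : tsupport f ⊆ Ioo a b) :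
    ∫ s in a..b, (deriv f s ^ 2 - c / s * f s ^ 2)
      = (∫ s in a..b, (deriv f s - (s⁻¹ - c / 2) * f s) ^ 2)
        - c ^ 2 / 4 * ∫ s in a..b, f s ^ 2 := by
  have hne : ∀ s ∈ uIcc a b, s ≠ 0 := fun s hs => by
    rw [uIcc_of_le hab] at hs
    exact (ha.trans_le hs.1).ne'
  have hne_sq : ∀ s ∈ uIcc a b, s ^ 2 ≠ 0 := fun s hs => pow_ne_zero 2 (hne s hs)
  have hcf : Continuous f := hf.continuous
  have hcf' : Continuous (deriv f) := hf.continuous_deriv le_rfl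
  have hfa : f a = 0 := image_eq_zero_of_notMem_tsupport fun h => (hsupp h).1.false
  have hfb : f b = 0 := image_eq_zero_of_notMem_tsupport fun h => (hsupp h).2.false
  have hboundary : ∫ s in a..b, (-(s ^ 2)⁻¹ * f s ^ 2 + (s⁻¹ - c / 2) * (2 * f s * deriv f s))
      = 0 := by
    rw [intervalIntegral.integral_eq_sub_of_hasDerivAt
      (fun s hs => hasDerivAt_inv_sub_mul_sq c (hne s hs)
        (hf.differentiable one_ne_zero s).hasDerivAt)
      (ContinuousOn.intervalIntegrable (by fun_prop (disch := first | exact hne | exact hne_sq)))]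
    simp [hfa, hfb]
  calc ∫ s in a..b, (deriv f s ^ 2 - c / s * f s ^ 2)
      = ∫ s in a..b, ((deriv f s - (s⁻¹ - c / 2) * f s) ^ 2
          + (-(s ^ 2)⁻¹ * f s ^ 2 + (s⁻¹ - c / 2) * (2 * f s * deriv f s))
          - c ^ 2 / 4 * f s ^ 2) :=
        intervalIntegral.integral_congr fun s hs => sq_sub_coulomb_eq (hne s hs) c (f s) _
    _ = (∫ s in a..b, (deriv f s - (s⁻¹ - c / 2) * f s) ^ 2)
        - c ^ 2 / 4 * ∫ s in a..b, f s ^ 2 := by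
      rw [intervalIntegral.integral_sub, intervalIntegral.integral_add,
        intervalIntegral.integral_const_mul, hboundary, add_zero]
      all_goals
        exact ContinuousOn.intervalIntegrable (by fun_prop (disch := first | exact hne | exact hne_sq))

theorem statement18_general (c : ℝ) (f : ℝ → ℝ) (hf : f ∈ Cc (Ioi 0)) :
    ∫ s in Ioi (0 : ℝ), ((deriv f s) ^ 2 - (c / s) * (f s) ^ 2)
      ≥ -(c ^ 2 / 4) * ∫ s in Ioi (0 : ℝ), (f s) ^ 2 := by
  obtain ⟨hsmooth, hcs, hsupp⟩ := hf
  obtain ⟨a, b, ha, hab, hsupp_ab⟩ := hcs.isCompact.exists_Ioo_superset_of_subset_Ioi hsupp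
  have hvanish : ∀ s ∉ Ioo a b, f s = 0 ∧ deriv f s = 0 := fun s hs =>
    ⟨image_eq_zero_of_notMem_tsupport fun h => hs (hsupp_ab h),
      Function.notMem_support.mp fun h => hs (hsupp_ab (support_deriv_subset h))⟩
  rw [setIntegral_Ioi_eq_intervalIntegral_of_support_subset ha.le hab
      (Function.support_subset_iff'.2 fun s hs => by simp [hvanish s hs]),
    setIntegral_Ioi_eq_intervalIntegral_of_support_subset ha.le hab
      (Function.support_subset_iff'.2 fun s hs => by simp [hvanish s hs]),
    intervalIntegral_sq_deriv_sub_coulomb_eq c (hsmooth.of_le (by exact_mod_cast le_top)) ha hab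
      hsupp_ab]
  have hsq : 0 ≤ ∫ s in a..b, (deriv f s - (s⁻¹ - c / 2) * f s) ^ 2 :=
    intervalIntegral.integral_nonneg hab fun s _ => sq_nonneg _
  linarith

/-- 1D Hardy-type inequality with Coulomb potential. -/
theorem statement18 (c : ℝ) (hc : 0 < c) (f : ℝ → ℝ) (hf : f ∈ Cc (Ioi 0)) :
    ∫ s in Ioi (0 : ℝ), ((deriv f s) ^ 2 - (c / s) * (f s) ^ 2)
      ≥ -(c ^ 2 / 4) * ∫ s in Ioi (0 : ℝ), (f s) ^ 2 :=
  statement18_general c f hf
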